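/- Let φ: 𝔫 → 𝔪 be an isomorphism of Hoffman graphs (a graph isomorphism preserving slim and fat labels), where 𝔫 = ⊕_{i=0}^{k} 𝔫^i and 𝔪 = ⊕_{i=0}^{l} 𝔪^i are decompositions into indecomposable addends. Then k = l and there exists a permutation σ of {0,...,k} such that φ restricted to 𝔫^i is an isomorphism from 𝔫^i onto 𝔪^{σ(i)} for every i. -/

import Mathlib

/-- A Hoffman graph: a finite simple graph with vertices labeled slim or fat,
fat vertices pairwise non-adjacent, each fat vertex with a slim neighbor. -/
structure HoffmanGraph (V : Type) where
  adj : V → V → Prop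
  symm : Symmetric adj
  irrefl : Irreflexive adj
  slim : V → Prop
  fat_slim_nbr : ∀ x, ¬ slim x → ∃ y, slim y ∧ adj x y
  fat_not_adj : ∀ x y, ¬ slim x → ¬ slim y → ¬ adj x y

namespace HoffmanGraph

variable {V W U : Type}

def slimSet (H : HoffmanGraph V) : Set V := {x | H.slim x}

def toSimple (H : HoffmanGraph V) : SimpleGraph V where
  Adj := H.adj
  symm := ⟨fun _ _ h => H.symm h⟩
  loopless := ⟨fun a h => H.irrefl a h⟩

/-- common fat neighbours of `x` and `y` within the carrier set `S`. -/
def fatCommonOn (H : HoffmanGraph V) (S : Set V) (x y : V) : Set V :=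
  {z | z ∈ S ∧ ¬ H.slim z ∧ H.adj x z ∧ H.adj y z}

/-- The induced Hoffman subgraph of `H` on `S` is the sum of the induced subgraphs
on the sets `P i`. -/
def IsSumOn (H : HoffmanGraph V) (S : Set V) {ι : Type} (P : ι → Set V) : Prop :=
  (∀ i, P i ⊆ S) ∧
  (⋃ i, P i) = S ∧
  (∀ x ∈ S, H.slim x → ∃! i, x ∈ P i) ∧
  (∀ i, ∀ x ∈ P i, H.slim x → ∀ z ∈ S, ¬ H.slim z → H.adj x z → z ∈ P i) ∧
  (∀ i, ∀ z ∈ P i, ¬ H.slim z → ∃ x ∈ P i, H.slim x ∧ H.adj z x) ∧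
  (∀ i j, i ≠ j → ∀ x ∈ P i, ∀ y ∈ P j, H.slim x → H.slim y →
    (H.fatCommonOn S x y).ncard ≤ 1 ∧ ((H.fatCommonOn S x y).ncard = 1 ↔ H.adj x y))

/-- Binary sum. -/
def IsSumOn2 (H : HoffmanGraph V) (S A B : Set V) : Prop :=
  H.IsSumOn S (fun b : Bool => if b then A else B)

/-- The induced Hoffman subgraph on `S` is non-empty and not a sum of two non-empty
Hoffman subgraphs. -/
def Indecomposable (H : HoffmanGraph V) (S : Set V) : Prop :=
  S.Nonempty ∧ ∀ A B : Set V, A.Nonempty → B.Nonempty → ¬ H.IsSumOn2 S A B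

/-- `⟪X⟫`: `X` together with the fat neighbours (inside the carrier `S`) of its members. -/
def hind (H : HoffmanGraph V) (S X : Set V) : Set V :=
  X ∪ {z | z ∈ S ∧ ¬ H.slim z ∧ ∃ x ∈ X, H.adj x z}

/-- `e` is an isomorphism of Hoffman graphs. -/
def IsIso (H : HoffmanGraph V) (K : HoffmanGraph W) (e : V ≃ W) : Prop :=
  (∀ x y, H.adj x y ↔ K.adj (e x) (e y)) ∧ ∀ x, (H.slim x ↔ K.slim (e x))

/-- `K` is isomorphic to the induced Hoffman subgraph of `L` on `S`. -/
def IsoToInduced (K : HoffmanGraph W) (L : HoffmanGraph U) (S : Set U) : Prop :=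
  ∃ e : W ≃ S, (∀ x y, K.adj x y ↔ L.adj (e x).1 (e y).1) ∧ ∀ x, (K.slim x ↔ L.slim (e x).1)

/-- `K` is isomorphic to an induced Hoffman subgraph of `L`. -/
def IsSubgraphOf (K : HoffmanGraph W) (L : HoffmanGraph U) : Prop :=
  ∃ S : Set U, IsoToInduced K L S

/-- The induced Hoffman subgraph on `S` is (isomorphic to) `𝔥₂`:
one slim vertex adjacent to two fat vertices. -/
def IsH2On (H : HoffmanGraph V) (S : Set V) : Prop :=
  ∃ s f₁ f₂ : V, f₁ ≠ f₂ ∧ S = {s, f₁, f₂} ∧ H.slim s ∧ ¬ H.slim f₁ ∧ ¬ H.slim f₂ ∧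
    H.adj s f₁ ∧ H.adj s f₂

/-- The induced Hoffman subgraph on `S` belongs to the family `𝔒`: it is `𝔥₂` or an
indecomposable fat Hoffman graph with at least 2 slim vertices and exactly one fat vertex. -/
def MemO (H : HoffmanGraph V) (S : Set V) : Prop :=
  H.IsH2On S ∨
  (H.Indecomposable S ∧ 2 ≤ (S ∩ H.slimSet).ncard ∧
    ∃ w ∈ S, ¬ H.slim w ∧ (∀ z ∈ S, ¬ H.slim z → z = w) ∧ ∀ x ∈ S, H.slim x → H.adj x w)

/-- The induced Hoffman subgraph of `L` on `S` is isomorphic to a member of the family `ℋ`. -/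
def MemFam (ℋ : ∀ W : Type, HoffmanGraph W → Prop) (L : HoffmanGraph U) (S : Set U) : Prop :=
  ∃ (W : Type) (K : HoffmanGraph W), ℋ W K ∧ IsoToInduced K L S

/-- `K` is a sum of members of `ℋ`. -/
def IsCoverGraph (ℋ : ∀ W : Type, HoffmanGraph W → Prop) (K : HoffmanGraph U) : Prop :=
  ∃ (n : ℕ) (P : Fin n → Set U), K.IsSumOn Set.univ P ∧ ∀ i, MemFam ℋ K (P i)

/-- `G` is a slim `ℋ`-line graph. -/
def IsSlimLine (ℋ : ∀ W : Type, HoffmanGraph W → Prop) {V : Type} (G : SimpleGraph V) : Prop :=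
  ∃ (U : Type) (K : HoffmanGraph U) (ι : V → U), Finite U ∧ Function.Injective ι ∧
    (∀ a, K.slim (ι a)) ∧ (∀ a b, G.Adj a b ↔ K.adj (ι a) (ι b)) ∧ IsCoverGraph ℋ K

/-- `K` (with slim vertices identified with `V(G)` via `ι`) is a strict `ℋ`-cover of `G`. -/
def IsStrictCover (ℋ : ∀ W : Type, HoffmanGraph W → Prop) {V U : Type}
    (G : SimpleGraph V) (K : HoffmanGraph U) (ι : V → U) : Prop :=
  Finite U ∧ Function.Injective ι ∧ (∀ a b, G.Adj a b ↔ K.adj (ι a) (ι b)) ∧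
  (∀ u, K.slim u ↔ ∃ a, ι a = u) ∧ IsCoverGraph ℋ K

/-- Two strict covers are equivalent: an isomorphism restricting to the identity on `G`. -/
def EquivCovers {V U U' : Type} (K : HoffmanGraph U) (ι : V → U)
    (K' : HoffmanGraph U') (ι' : V → U') : Prop :=
  ∃ φ : U ≃ U', IsIso K K' φ ∧ ∀ a, φ (ι a) = ι' a

/-- The family `ℋ̄ = {𝔥₂} ∪ {𝔤 ∈ 𝔒 : 𝔤 is a Hoffman subgraph of a member of ℋ}`. -/
def BarFam (ℋ : ∀ W : Type, HoffmanGraph W → Prop) : ∀ W : Type, HoffmanGraph W → Prop :=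
  fun _ K => K.IsH2On Set.univ ∨
    (K.MemO Set.univ ∧ ∃ (U : Type) (L : HoffmanGraph U), ℋ U L ∧ IsSubgraphOf K L)

/-- `G` has a strict `ℱ`-cover and it is unique up to equivalence. -/
def UniqueStrictCover (ℱ : ∀ W : Type, HoffmanGraph W → Prop) {V : Type}
    (G : SimpleGraph V) : Prop :=
  (∃ (U : Type) (K : HoffmanGraph U) (ι : V → U), IsStrictCover ℱ G K ι) ∧
  ∀ (U U' : Type) (K : HoffmanGraph U) (K' : HoffmanGraph U') (ι : V → U) (ι' : V → U'),
    IsStrictCover ℱ G K ι → IsStrictCover ℱ G K' ι' → EquivCovers K ι K' ι'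

end HoffmanGraph
namespace HoffmanGraph

variable {V W : Type}

lemma IsIso.symm' {H : HoffmanGraph V} {K : HoffmanGraph W} {e : V ≃ W}
    (h : IsIso H K e) : IsIso K H e.symm := by
  constructor
  · intro x y
    rw [h.1 (e.symm x) (e.symm y), e.apply_symm_apply, e.apply_symm_apply]
  · intro x; rw [h.2 (e.symm x), e.apply_symm_apply]

lemma fatCommonOn_image {H : HoffmanGraph V} {K : HoffmanGraph W} {e : V ≃ W}
    (h : IsIso H K e) (S : Set V) (x y : V) :
    K.fatCommonOn (e '' S) (e x) (e y) = e '' H.fatCommonOn S x y := by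
  ext z
  simp only [fatCommonOn, Set.mem_image, Set.mem_setOf_eq]
  constructor
  · rintro ⟨⟨w, hwS, rfl⟩, h1, h2, h3⟩
    exact ⟨w, ⟨hwS, fun hs => h1 ((h.2 w).mp hs), (h.1 x w).mpr h2, (h.1 y w).mpr h3⟩, rfl⟩
  · rintro ⟨w, ⟨hwS, h1, h2, h3⟩, rfl⟩
    exact ⟨⟨w, hwS, rfl⟩, fun hs => h1 ((h.2 w).mpr hs), (h.1 x w).mp h2, (h.1 y w).mp h3⟩

lemma IsSumOn.image' {H : HoffmanGraph V} {K : HoffmanGraph W} {e : V ≃ W}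
    (h : IsIso H K e) {S : Set V} {ι : Type} {P : ι → Set V}
    (hP : H.IsSumOn S P) : K.IsSumOn (e '' S) (fun i => e '' P i) := by
  obtain ⟨h1, h2, h3, h4, h5, h6⟩ := hP
  refine ⟨fun i => Set.image_mono (h1 i), ?_, ?_, ?_, ?_, ?_⟩
  · rw [← Set.image_iUnion, h2]
  · rintro w ⟨v, hvS, rfl⟩ hslim
    obtain ⟨i, hi, hu⟩ := h3 v hvS ((h.2 v).mpr hslim)
    refine ⟨i, ⟨v, hi, rfl⟩, ?_⟩
    rintro j ⟨u, hu', heq⟩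
    exact hu j (by rwa [e.injective heq] at hu')
  · rintro i w ⟨v, hvP, rfl⟩ hslim z ⟨u, huS, rfl⟩ hfat hadj
    exact ⟨u, h4 i v hvP ((h.2 v).mpr hslim) u huS (fun hs => hfat ((h.2 u).mp hs))
      ((h.1 v u).mpr hadj), rfl⟩
  · rintro i w ⟨v, hvP, rfl⟩ hfat
    obtain ⟨x, hxP, hxs, hadj⟩ := h5 i v hvP (fun hs => hfat ((h.2 v).mp hs))
    exact ⟨e x, ⟨x, hxP, rfl⟩, (h.2 x).mp hxs, (h.1 v x).mp hadj⟩
  · rintro i j hij w ⟨x, hxP, rfl⟩ w' ⟨y, hyP, rfl⟩ hxs hys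
    have key := h6 i j hij x hxP y hyP ((h.2 x).mpr hxs) ((h.2 y).mpr hys)
    rw [fatCommonOn_image h, Set.ncard_image_of_injective _ e.injective]
    exact ⟨key.1, key.2.trans ((h.1 x y))⟩

lemma Indecomposable.image' {H : HoffmanGraph V} {K : HoffmanGraph W} {e : V ≃ W}
    (h : IsIso H K e) {S : Set V} (hS : H.Indecomposable S) :
    K.Indecomposable (e '' S) := by
  refine ⟨hS.1.image e, fun A B hA hB hsum => ?_⟩
  have h2 : H.IsSumOn (e.symm '' (e '' S)) (fun b : Bool => e.symm '' (if b then A else B)) :=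
    IsSumOn.image' (IsIso.symm' h) hsum
  rw [Equiv.symm_image_image] at h2
  have h3 : (fun b : Bool => e.symm '' (if b then A else B)) =
      (fun b : Bool => if b then e.symm '' A else e.symm '' B) := by
    funext b; cases b <;> rfl
  rw [h3] at h2
  exact hS.2 _ _ (hA.image _) (hB.image _) h2

lemma fatCommonOn_comm (H : HoffmanGraph V) (S : Set V) (x y : V) :
    H.fatCommonOn S x y = H.fatCommonOn S y x := by
  ext z; simp only [fatCommonOn, Set.mem_setOf_eq]; tauto

lemma isSumOn2_intro (H : HoffmanGraph V) {S A B : Set V}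
    (hA : A ⊆ S) (hB : B ⊆ S)
    (hcov : ∀ v ∈ S, v ∈ A ∨ v ∈ B)
    (hdisj : ∀ x, H.slim x → x ∈ A → x ∉ B)
    (hclA : ∀ x ∈ A, H.slim x → ∀ z ∈ S, ¬H.slim z → H.adj x z → z ∈ A)
    (hclB : ∀ x ∈ B, H.slim x → ∀ z ∈ S, ¬H.slim z → H.adj x z → z ∈ B)
    (hfA : ∀ z ∈ A, ¬H.slim z → ∃ x ∈ A, H.slim x ∧ H.adj z x)
    (hfB : ∀ z ∈ B, ¬H.slim z → ∃ x ∈ B, H.slim x ∧ H.adj z x)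
    (hcross : ∀ x ∈ A, ∀ y ∈ B, H.slim x → H.slim y →
      (H.fatCommonOn S x y).ncard ≤ 1 ∧ ((H.fatCommonOn S x y).ncard = 1 ↔ H.adj x y)) :
    H.IsSumOn2 S A B := by
  refine ⟨?_, ?_, ?_, ?_, ?_, ?_⟩
  · intro b; cases b
    · exact hB
    · exact hA
  · apply Set.Subset.antisymm
    · intro v hv
      simp only [Set.mem_iUnion] at hv
      obtain ⟨b, hb⟩ := hv
      cases b
      · exact hB hb
      · exact hA hb
    · intro v hv
      rcases hcov v hv with h | h
      · exact Set.mem_iUnion.mpr ⟨true, h⟩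
      · exact Set.mem_iUnion.mpr ⟨false, h⟩
  · intro x hxS hxs
    rcases hcov x hxS with h | h
    · refine ⟨true, h, ?_⟩
      intro b hb; cases b
      · exact absurd hb (hdisj x hxs h)
      · rfl
    · by_cases h' : x ∈ A
      · refine ⟨true, h', ?_⟩
        intro b hb; cases b
        · exact absurd hb (hdisj x hxs h')
        · rfl
      · refine ⟨false, h, ?_⟩
        intro b hb; cases b
        · rfl
        · exact absurd (hdisj x hxs hb h) not_false
  · intro b; cases b
    · exact hclB
    · exact hclA
  · intro b; cases b
    · exact hfB
    · exact hfA
  · intro b b' hne x hx y hy hxs hys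
    cases b <;> cases b'
    · exact absurd rfl hne
    · -- x ∈ B, y ∈ A
      have key := hcross y hy x hx hys hxs
      rw [fatCommonOn_comm] at key
      exact ⟨key.1, key.2.trans ⟨fun h => H.symm h, fun h => H.symm h⟩⟩
    · exact hcross x hx y hy hxs hys
    · exact absurd rfl hne

lemma slim_subset_part {V : Type} [Fintype V] {H : HoffmanGraph V} {ι κ : Type}
    {P : ι → Set V} {Q : κ → Set V}
    (hP : H.IsSumOn Set.univ P) (hQ : H.IsSumOn Set.univ Q)
    (i : ι) (hind : H.Indecomposable (P i)) :
    ∃ j, ∀ x ∈ P i, H.slim x → x ∈ Q j := by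
  obtain ⟨hP1, hP2, hP3, hP4, hP5, hP6⟩ := hP
  obtain ⟨hQ1, hQ2, hQ3, hQ4, hQ5, hQ6⟩ := hQ
  -- find a slim vertex x0 of P i
  obtain ⟨x0, hx0P, hx0s⟩ : ∃ x ∈ P i, H.slim x := by
    obtain ⟨v, hv⟩ := hind.1
    by_cases hs : H.slim v
    · exact ⟨v, hv, hs⟩
    · obtain ⟨x, hxP, hxs, _⟩ := hP5 i v hv hs
      exact ⟨x, hxP, hxs⟩
  obtain ⟨j0, hj0, _⟩ := hQ3 x0 (Set.mem_univ _) hx0s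
  by_contra hcon
  push_neg at hcon
  obtain ⟨y, hyP, hys, hyQ⟩ := hcon j0
  set A : Set V := {v | v ∈ P i ∧ ((H.slim v ∧ v ∈ Q j0) ∨
    (¬ H.slim v ∧ ∃ x, x ∈ P i ∧ H.slim x ∧ x ∈ Q j0 ∧ H.adj x v))} with hAdef
  set B : Set V := {v | v ∈ P i ∧ ((H.slim v ∧ v ∉ Q j0) ∨
    (¬ H.slim v ∧ ∃ x, x ∈ P i ∧ H.slim x ∧ x ∉ Q j0 ∧ H.adj x v))} with hBdef
  have memA_slim : ∀ x, H.slim x → x ∈ A → x ∈ Q j0 := by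
    rintro x hxs ⟨_, (⟨_, h⟩ | ⟨h, _⟩)⟩
    · exact h
    · exact absurd hxs h
  have memB_slim : ∀ x, H.slim x → x ∈ B → x ∉ Q j0 := by
    rintro x hxs ⟨_, (⟨_, h⟩ | ⟨h, _⟩)⟩
    · exact h
    · exact absurd hxs h
  refine hind.2 A B ⟨x0, hx0P, Or.inl ⟨hx0s, hj0⟩⟩ ⟨y, hyP, Or.inl ⟨hys, hyQ⟩⟩ ?_
  refine isSumOn2_intro H (fun v hv => hv.1) (fun v hv => hv.1) ?_ ?_ ?_ ?_ ?_ ?_ ?_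
  · -- cover
    intro v hv
    by_cases hs : H.slim v
    · by_cases hq : v ∈ Q j0
      · exact Or.inl ⟨hv, Or.inl ⟨hs, hq⟩⟩
      · exact Or.inr ⟨hv, Or.inl ⟨hs, hq⟩⟩
    · obtain ⟨x, hxP, hxs, hadj⟩ := hP5 i v hv hs
      by_cases hq : x ∈ Q j0
      · exact Or.inl ⟨hv, Or.inr ⟨hs, x, hxP, hxs, hq, H.symm hadj⟩⟩
      · exact Or.inr ⟨hv, Or.inr ⟨hs, x, hxP, hxs, hq, H.symm hadj⟩⟩
  · -- disjoint on slim
    intro x hxs hxA hxB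
    exact memB_slim x hxs hxB (memA_slim x hxs hxA)
  · -- closure A
    intro x hxA hxs z hzP hzf hadj
    exact ⟨hzP, Or.inr ⟨hzf, x, hxA.1, hxs, memA_slim x hxs hxA, hadj⟩⟩
  · -- closure B
    intro x hxB hxs z hzP hzf hadj
    exact ⟨hzP, Or.inr ⟨hzf, x, hxB.1, hxs, memB_slim x hxs hxB, hadj⟩⟩
  · -- fat has slim nbr in A
    rintro z ⟨hzP, (⟨hs, _⟩ | ⟨hzf, x, hxP, hxs, hxQ, hadj⟩)⟩ hzf
    · exact absurd hs hzf
    · exact ⟨x, ⟨hxP, Or.inl ⟨hxs, hxQ⟩⟩, hxs, H.symm hadj⟩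
  · rintro z ⟨hzP, (⟨hs, _⟩ | ⟨hzf, x, hxP, hxs, hxQ, hadj⟩)⟩ hzf
    · exact absurd hs hzf
    · exact ⟨x, ⟨hxP, Or.inl ⟨hxs, hxQ⟩⟩, hxs, H.symm hadj⟩
  · -- cross condition
    intro x hxA y hyB hxs hys
    have hxQ := memA_slim x hxs hxA
    have hyQ' := memB_slim y hys hyB
    obtain ⟨j1, hj1, _⟩ := hQ3 y (Set.mem_univ _) hys
    have hne : j0 ≠ j1 := fun h => hyQ' (h ▸ hj1)
    have key := hQ6 j0 j1 hne x hxQ y hj1 hxs hys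
    have hsub : H.fatCommonOn (P i) x y ⊆ H.fatCommonOn Set.univ x y := by
      rintro z ⟨_, h⟩; exact ⟨Set.mem_univ _, h⟩
    have hle : (H.fatCommonOn (P i) x y).ncard ≤ 1 :=
      le_trans (Set.ncard_le_ncard hsub (Set.toFinite _)) key.1
    refine ⟨hle, ?_, ?_⟩
    · intro h1
      have hne' : (H.fatCommonOn Set.univ x y).Nonempty := by
        obtain ⟨z, hz⟩ := Set.nonempty_of_ncard_ne_zero (h1 ▸ one_ne_zero)
        exact ⟨z, hsub hz⟩
      have := (Set.ncard_pos (Set.toFinite _)).mpr hne'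
      exact key.2.mp (by omega)
    · intro hadj
      have h1 := key.2.mpr hadj
      obtain ⟨z, hzu, hzf, hzx, hzy⟩ := Set.nonempty_of_ncard_ne_zero (h1 ▸ one_ne_zero)
      have hzP : z ∈ P i := hP4 i x hxA.1 hxs z (Set.mem_univ _) hzf hzx
      have hne' : (H.fatCommonOn (P i) x y).Nonempty := ⟨z, hzP, hzf, hzx, hzy⟩
      have := (Set.ncard_pos (Set.toFinite _)).mpr hne'
      omega

lemma core_unique {V : Type} [Fintype V] {H : HoffmanGraph V} {ι κ : Type}
    {P : ι → Set V} {Q : κ → Set V}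
    (hP : H.IsSumOn Set.univ P) (hQ : H.IsSumOn Set.univ Q)
    (hPind : ∀ i, H.Indecomposable (P i)) (hQind : ∀ j, H.Indecomposable (Q j)) :
    ∃ f : ι → κ, ∃ g : κ → ι, (∀ i, g (f i) = i) ∧ (∀ j, f (g j) = j) ∧
      ∀ i, P i = Q (f i) := by
  choose f hf using fun i => slim_subset_part hP hQ i (hPind i)
  choose g hg using fun j => slim_subset_part hQ hP j (hQind j)
  have slimP : ∀ i : ι, ∃ x ∈ P i, H.slim x := by
    intro i
    obtain ⟨v, hv⟩ := (hPind i).1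
    by_cases hs : H.slim v
    · exact ⟨v, hv, hs⟩
    · obtain ⟨x, hxP, hxs, _⟩ := hP.2.2.2.2.1 i v hv hs
      exact ⟨x, hxP, hxs⟩
  have slimQ : ∀ j : κ, ∃ x ∈ Q j, H.slim x := by
    intro j
    obtain ⟨v, hv⟩ := (hQind j).1
    by_cases hs : H.slim v
    · exact ⟨v, hv, hs⟩
    · obtain ⟨x, hxP, hxs, _⟩ := hQ.2.2.2.2.1 j v hv hs
      exact ⟨x, hxP, hxs⟩
  have hgf : ∀ i, g (f i) = i := by
    intro i
    obtain ⟨x, hxP, hxs⟩ := slimP i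
    obtain ⟨i', _, hu⟩ := hP.2.2.1 x (Set.mem_univ _) hxs
    rw [hu (g (f i)) (hg (f i) x (hf i x hxP hxs) hxs), hu i hxP]
  have hfg : ∀ j, f (g j) = j := by
    intro j
    obtain ⟨x, hxQ, hxs⟩ := slimQ j
    obtain ⟨j', _, hu⟩ := hQ.2.2.1 x (Set.mem_univ _) hxs
    rw [hu (f (g j)) (hf (g j) x (hg j x hxQ hxs) hxs), hu j hxQ]
  refine ⟨f, g, hgf, hfg, fun i => ?_⟩
  ext v
  constructor
  · intro hv
    by_cases hs : H.slim v
    · exact hf i v hv hs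
    · obtain ⟨x, hxP, hxs, hadj⟩ := hP.2.2.2.2.1 i v hv hs
      exact hQ.2.2.2.1 (f i) x (hf i x hxP hxs) hxs v (Set.mem_univ _) hs (H.symm hadj)
  · intro hv
    by_cases hs : H.slim v
    · have := hg (f i) v hv hs
      rwa [hgf i] at this
    · obtain ⟨x, hxQ, hxs, hadj⟩ := hQ.2.2.2.2.1 (f i) v hv hs
      have hxP : x ∈ P i := by
        have := hg (f i) x hxQ hxs
        rwa [hgf i] at this
      exact hP.2.2.2.1 i x hxP hxs v (Set.mem_univ _) hs (H.symm hadj)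

end HoffmanGraph
open HoffmanGraph in
/-- An isomorphism of Hoffman graphs maps indecomposable addends onto indecomposable
addends. -/
theorem stmt1 {V W : Type} [Fintype V] [Fintype W]
    (H : HoffmanGraph V) (K : HoffmanGraph W) (e : V ≃ W) (hiso : IsIso H K e)
    (k l : ℕ) (P : Fin (k + 1) → Set V) (Q : Fin (l + 1) → Set W)
    (hP : H.IsSumOn Set.univ P) (hQ : K.IsSumOn Set.univ Q)
    (hPind : ∀ i, H.Indecomposable (P i)) (hQind : ∀ i, K.Indecomposable (Q i)) :
    k = l ∧ ∃ σ : Fin (k + 1) ≃ Fin (l + 1), ∀ i, e '' P i = Q (σ i) := by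

  have hQ' : H.IsSumOn Set.univ (fun j => e.symm '' Q j) := by
    have := IsSumOn.image' (IsIso.symm' hiso) hQ
    rwa [Set.image_univ, Equiv.range_eq_univ] at this
  have hQ'ind : ∀ j, H.Indecomposable (e.symm '' Q j) :=
    fun j => Indecomposable.image' (IsIso.symm' hiso) (hQind j)
  obtain ⟨f, g, hgf, hfg, heq⟩ := core_unique hP hQ' hPind hQ'ind
  have hcard := Fintype.card_congr (⟨f, g, hgf, hfg⟩ : Fin (k + 1) ≃ Fin (l + 1))
  simp only [Fintype.card_fin] at hcard
  refine ⟨by omega, ⟨f, g, hgf, hfg⟩, fun i => ?_⟩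
  rw [heq i]
  simp [Set.image_image]
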